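/- arXiv:2508.06469 — 8 statements merged into one kernel-verified Lean document; each statement's English description precedes it below -/
import Mathlib

section
/- Buyer deviation lemma (fixed value): for every nondecreasing c : [0,1] → ℝ, every v ∈ ℝ, and every quantile q ∈ [0,1] with q ≤ x(v), the buyer's optimal take-it-or-leave-it proposer utility satisfies sup_{p ∈ ℝ} (v − p)·x(p) ≥ q·(v − c(q)). -/
open MeasureTheory Set

/-- The probability that the seller (with cost curve `c` on quantiles in `[0,1]`)
accepts a price `p`: the Lebesgue measure of `{q ∈ [0,1] : c q ≤ p}`. -/
noncomputable def accProb (c : ℝ → ℝ) (p : ℝ) : ℝ :=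
  (volume {q : ℝ | q ∈ Icc (0:ℝ) 1 ∧ c q ≤ p}).toReal

lemma accSet_subset (c : ℝ → ℝ) (p : ℝ) :
    {q : ℝ | q ∈ Icc (0:ℝ) 1 ∧ c q ≤ p} ⊆ Icc (0:ℝ) 1 := fun _ h => h.1

lemma accMeas_ne_top (c : ℝ → ℝ) (p : ℝ) :
    volume {q : ℝ | q ∈ Icc (0:ℝ) 1 ∧ c q ≤ p} ≠ ⊤ := by
  refine ne_top_of_le_ne_top ?_ (measure_mono (accSet_subset c p))
  simp [Real.volume_Icc]

lemma accProb_nonneg (c : ℝ → ℝ) (p : ℝ) : 0 ≤ accProb c p :=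
  ENNReal.toReal_nonneg

lemma accProb_le_one (c : ℝ → ℝ) (p : ℝ) : accProb c p ≤ 1 := by
  have h := measure_mono (μ := volume) (accSet_subset c p)
  rw [Real.volume_Icc] at h
  simpa [accProb] using ENNReal.toReal_le_of_le_ofReal zero_le_one (by simpa using h)

lemma accProb_ge (c : ℝ → ℝ) (hc : MonotoneOn c (Icc (0:ℝ) 1))
    (q : ℝ) (hq : q ∈ Icc (0:ℝ) 1) : q ≤ accProb c (c q) := by
  have hsub : Icc (0:ℝ) q ⊆ {q' : ℝ | q' ∈ Icc (0:ℝ) 1 ∧ c q' ≤ c q} := by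
    intro x hx
    have hx1 : x ∈ Icc (0:ℝ) 1 := ⟨hx.1, hx.2.trans hq.2⟩
    exact ⟨hx1, hc hx1 hq hx.2⟩
  have h := measure_mono (μ := volume) hsub
  rw [Real.volume_Icc] at h
  have := ENNReal.toReal_mono (accMeas_ne_top c (c q)) h
  simpa [accProb, hq.1] using this

theorem stmt1 (c : ℝ → ℝ) (hc : MonotoneOn c (Icc (0:ℝ) 1)) (v : ℝ)
    (q : ℝ) (hq : q ∈ Icc (0:ℝ) 1) (hqx : q ≤ accProb c v) :
    (⨆ p : ℝ, (v - p) * accProb c p) ≥ q * (v - c q) := by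
  have hq0 : 0 ≤ q := hq.1
  have hbdd : BddAbove (range fun p : ℝ => (v - p) * accProb c p) := by
    refine ⟨max 0 (v - c 0), ?_⟩
    rintro _ ⟨p, rfl⟩
    rcases eq_empty_or_nonempty {q' : ℝ | q' ∈ Icc (0:ℝ) 1 ∧ c q' ≤ p} with he | hne
    · have : accProb c p = 0 := by rw [accProb, he]; simp
      simp [this, le_max_left]
    · obtain ⟨q', hq'⟩ := hne
      have hc0p : c 0 ≤ p :=
        (hc (left_mem_Icc.2 zero_le_one) hq'.1 hq'.1.1).trans hq'.2
      rcases le_or_gt (v - p) 0 with hvp | hvp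
      · exact le_trans (mul_nonpos_of_nonpos_of_nonneg hvp (accProb_nonneg c p))
          (le_max_left _ _)
      · refine le_trans ?_ (le_max_right _ _)
        calc (v - p) * accProb c p ≤ (v - c 0) * 1 :=
              mul_le_mul (by linarith) (accProb_le_one c p) (accProb_nonneg c p)
                (by linarith)
          _ = v - c 0 := mul_one _
  rcases le_or_gt (c q) v with hcv | hcv
  · have h1 : q * (v - c q) ≤ (v - c q) * accProb c (c q) := by
      rw [mul_comm]
      exact mul_le_mul_of_nonneg_left (accProb_ge c hc q hq) (by linarith)
    exact le_trans h1 (le_ciSup hbdd (c q))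
  · have h1 : q * (v - c q) ≤ (v - v) * accProb c v := by
      rw [sub_self, zero_mul]
      exact mul_nonpos_of_nonneg_of_nonpos hq0 (by linarith)
    exact le_trans h1 (le_ciSup hbdd v)
end

section
/- Logarithmic area bound (fixed value): for every nondecreasing c : [0,1] → ℝ, every v ∈ ℝ, and every λ ∈ (0,1), the area A := ∫_{λ·x(v)}^{x(v)} (v − c(q)) dq satisfies A ≤ (sup_{p ∈ ℝ} (v − p)·x(p)) · ln(1/λ). -/
open MeasureTheory Set

theorem stmt2 (c : ℝ → ℝ) (hc : MonotoneOn c (Icc (0:ℝ) 1)) (v : ℝ)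
    (l : ℝ) (hl : l ∈ Ioo (0:ℝ) 1) :
    (∫ q in (l * accProb c v)..(accProb c v), (v - c q)) ≤
      (⨆ p : ℝ, (v - p) * accProb c p) * Real.log (1 / l) := by
  obtain ⟨hl0, hl1⟩ := hl
  have hmeas_le : ∀ p, volume {q : ℝ | q ∈ Icc (0:ℝ) 1 ∧ c q ≤ p} ≤ 1 := by
    intro p
    calc volume {q : ℝ | q ∈ Icc (0:ℝ) 1 ∧ c q ≤ p}
        ≤ volume (Icc (0:ℝ) 1) := measure_mono (fun q hq => hq.1)
      _ = 1 := by simp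
  have hmeas_ne : ∀ p, volume {q : ℝ | q ∈ Icc (0:ℝ) 1 ∧ c q ≤ p} ≠ ⊤ :=
    fun p => ne_top_of_le_ne_top (by simp) (hmeas_le p)
  have hacc0 : ∀ p, 0 ≤ accProb c p := fun p => ENNReal.toReal_nonneg
  have haccle : ∀ p, accProb c p ≤ 1 := by
    intro p
    have := ENNReal.toReal_mono (by simp) (hmeas_le p)
    simpa [accProb] using this
  set x := accProb c v with hxdef
  set S := ⨆ p : ℝ, (v - p) * accProb c p with hSdef
  have hbdd : BddAbove (Set.range fun p : ℝ => (v - p) * accProb c p) := by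
    refine ⟨max 0 (v - c 0), ?_⟩
    rintro _ ⟨p, rfl⟩
    by_cases hvp : v - p ≤ 0
    · have : (v - p) * accProb c p ≤ 0 :=
        mul_nonpos_of_nonpos_of_nonneg hvp (hacc0 p)
      exact this.trans (le_max_left _ _)
    · push_neg at hvp
      by_cases hz : accProb c p = 0
      · simp [hz]
      · have hne : volume {q : ℝ | q ∈ Icc (0:ℝ) 1 ∧ c q ≤ p} ≠ 0 := by
          intro h0
          exact hz ((ENNReal.toReal_eq_zero_iff _).mpr (Or.inl h0))
        obtain ⟨q0, hq0⟩ := nonempty_of_measure_ne_zero hne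
        have hc0 : c 0 ≤ p :=
          le_trans (hc (left_mem_Icc.mpr one_pos.le) hq0.1 hq0.1.1) hq0.2
        have h1 : (v - p) * accProb c p ≤ (v - p) * 1 :=
          mul_le_mul_of_nonneg_left (haccle p) hvp.le
        have : (v - p) * accProb c p ≤ v - c 0 := by nlinarith
        exact this.trans (le_max_right _ _)
  have hS0 : 0 ≤ S := by
    have := le_ciSup hbdd v
    simpa using this
  have hlog0 : 0 ≤ Real.log (1 / l) :=
    Real.log_nonneg (one_le_one_div hl0 hl1.le)
  rcases eq_or_lt_of_le (hacc0 v) with hx0 | hxpos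
  · have hx0' : x = 0 := hx0.symm
    rw [hx0', mul_zero, intervalIntegral.integral_same]
    exact mul_nonneg hS0 hlog0
  · have hxpos : 0 < x := hxpos
    have hxle1 : x ≤ 1 := haccle v
    have hlxx : l * x ≤ x := by nlinarith
    have hlx_pos : 0 < l * x := mul_pos hl0 hxpos
    have hsub01 : Icc (l * x) x ⊆ Icc (0:ℝ) 1 :=
      fun q hq => ⟨le_trans hlx_pos.le hq.1, hq.2.trans hxle1⟩
    -- pointwise bound
    have hkey : ∀ q ∈ Icc (l * x) x, v - c q ≤ S / q := by
      intro q hq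
      have hq01 : q ∈ Icc (0:ℝ) 1 := hsub01 hq
      have hqpos : 0 < q := lt_of_lt_of_le hlx_pos hq.1
      have hqacc : q ≤ accProb c (c q) := by
        have hsub : Icc (0:ℝ) q ⊆ {q' : ℝ | q' ∈ Icc (0:ℝ) 1 ∧ c q' ≤ c q} := by
          intro q' hq'
          have hq'01 : q' ∈ Icc (0:ℝ) 1 := ⟨hq'.1, hq'.2.trans hq01.2⟩
          exact ⟨hq'01, hc hq'01 hq01 hq'.2⟩
        have hm : volume (Icc (0:ℝ) q) ≤ volume {q' : ℝ | q' ∈ Icc (0:ℝ) 1 ∧ c q' ≤ c q} :=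
          measure_mono hsub
        have := ENNReal.toReal_mono (hmeas_ne (c q)) hm
        simpa [accProb, Real.volume_Icc, ENNReal.toReal_ofReal hqpos.le] using this
      have hSf : (v - c q) * accProb c (c q) ≤ S := le_ciSup hbdd (c q)
      by_cases hvc : v - c q ≤ 0
      · exact hvc.trans (div_nonneg hS0 hqpos.le)
      · push_neg at hvc
        rw [le_div_iff₀ hqpos]
        nlinarith [hacc0 (c q)]
    -- integrability
    have hintc : IntervalIntegrable (fun q => v - c q) volume (l * x) x := by
      have : MonotoneOn c (uIcc (l * x) x) := by
        rw [uIcc_of_le hlxx]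
        exact hc.mono hsub01
      exact (intervalIntegrable_const).sub this.intervalIntegrable
    have hne0 : (0:ℝ) ∉ uIcc (l * x) x := by
      rw [uIcc_of_le hlxx]
      intro h0
      exact absurd h0.1 (not_le.mpr hlx_pos)
    have hne0' : ∀ q : ℝ, q ∈ uIcc (l * x) x → q ≠ 0 := by
      intro q hq h
      exact hne0 (h ▸ hq)
    have hintS : IntervalIntegrable (fun q => S / q) volume (l * x) x := by
      simp only [div_eq_mul_inv]
      exact (intervalIntegral.intervalIntegrable_inv hne0' continuousOn_id).const_mul S
    calc (∫ q in (l * x)..x, (v - c q))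
        ≤ ∫ q in (l * x)..x, S / q :=
          intervalIntegral.integral_mono_on hlxx hintc hintS hkey
      _ = S * ∫ q in (l * x)..x, q⁻¹ := by
          simp only [div_eq_mul_inv]
          exact intervalIntegral.integral_const_mul S _
      _ = S * Real.log (x / (l * x)) := by
          rw [integral_inv hne0]
      _ = S * Real.log (1 / l) := by
          congr 1
          rw [mul_comm l x, div_mul_eq_div_div, div_self hxpos.ne']
end

section
/- Fixed-value combined inequality: for every nondecreasing c : [0,1] → ℝ, every v ∈ ℝ, and every λ ∈ (0,1), one has (1 − λ)·∫₀^{x(v)} (v − c(q)) dq ≤ ∫₀^{λ·x(v)} (c(q/λ) − c(q)) dq + (sup_{p ∈ ℝ} (v − p)·x(p)) · ln(1/λ). -/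
open MeasureTheory Set

lemma le_accProb (c : ℝ → ℝ) (hc : MonotoneOn c (Icc (0:ℝ) 1)) {q : ℝ}
    (hq0 : 0 ≤ q) (hq1 : q ≤ 1) : q ≤ accProb c (c q) := by
  have hqm : q ∈ Icc (0:ℝ) 1 := ⟨hq0, hq1⟩
  have hsub : Icc (0:ℝ) q ⊆ {r : ℝ | r ∈ Icc (0:ℝ) 1 ∧ c r ≤ c q} := by
    intro r hr
    exact ⟨⟨hr.1, hr.2.trans hq1⟩, hc ⟨hr.1, hr.2.trans hq1⟩ hqm hr.2⟩
  have hfin : volume {r : ℝ | r ∈ Icc (0:ℝ) 1 ∧ c r ≤ c q} ≠ ⊤ := by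
    refine ne_top_of_le_ne_top ?_ (measure_mono (fun r hr => hr.1))
    simp [Real.volume_Icc]
  calc q = (volume (Icc (0:ℝ) q)).toReal := by simp [Real.volume_Icc, hq0]
    _ ≤ accProb c (c q) := ENNReal.toReal_mono hfin (measure_mono hsub)

theorem stmt4 (c : ℝ → ℝ) (hc : MonotoneOn c (Icc (0:ℝ) 1)) (v : ℝ)
    (l : ℝ) (hl : l ∈ Ioo (0:ℝ) 1) :
    (1 - l) * ∫ q in (0:ℝ)..(accProb c v), (v - c q) ≤
      (∫ q in (0:ℝ)..(l * accProb c v), (c (q / l) - c q)) +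
        (⨆ p : ℝ, (v - p) * accProb c p) * Real.log (1 / l) := by
  obtain ⟨hl0, hl1⟩ := hl
  set x := accProb c v with hxdef
  have hx0 : 0 ≤ x := accProb_nonneg c v
  have hx1 : x ≤ 1 := accProb_le_one c v
  have hlx0 : 0 ≤ l * x := mul_nonneg hl0.le hx0
  have hlxx : l * x ≤ x := by nlinarith
  have hlx1 : l * x ≤ 1 := hlxx.trans hx1
  -- boundedness of the sup
  have hbdd : BddAbove (Set.range fun p => (v - p) * accProb c p) := by
    refine ⟨max 0 (v - c 0), ?_⟩
    rintro _ ⟨p, rfl⟩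
    by_cases hpv : v ≤ p
    · exact le_trans
        (mul_nonpos_of_nonpos_of_nonneg (by linarith) (accProb_nonneg c p))
        (le_max_left _ _)
    · by_cases hpc : p < c 0
      · have hempty : {q : ℝ | q ∈ Icc (0:ℝ) 1 ∧ c q ≤ p} = ∅ := by
          ext q
          simp only [mem_setOf_eq, mem_empty_iff_false, iff_false, not_and]
          intro hq hcq
          exact absurd (le_trans (hc (left_mem_Icc.mpr one_pos.le) hq hq.1) hcq)
            (not_le.mpr hpc)
        have hz : accProb c p = 0 := by rw [accProb, hempty]; simp
        show (v - p) * accProb c p ≤ _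
        rw [hz, mul_zero]; exact le_max_left _ _
      · push_neg at hpv hpc
        calc (v - p) * accProb c p ≤ (v - p) * 1 :=
              mul_le_mul_of_nonneg_left (accProb_le_one c p) (by linarith)
          _ ≤ max 0 (v - c 0) := by
              rw [mul_one]; exact le_max_of_le_right (by linarith)
  set U := ⨆ p : ℝ, (v - p) * accProb c p with hUdef
  have hU0 : 0 ≤ U := by
    have h := le_ciSup hbdd v
    simpa using h
  have hlog0 : 0 ≤ Real.log (1 / l) :=
    Real.log_nonneg (one_le_one_div hl0 hl1.le)
  -- integrability
  have hsub1 : uIcc (0:ℝ) x ⊆ Icc (0:ℝ) 1 := by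
    rw [uIcc_of_le hx0]; exact Icc_subset_Icc le_rfl hx1
  have hsub2 : uIcc (0:ℝ) (l * x) ⊆ Icc (0:ℝ) 1 := by
    rw [uIcc_of_le hlx0]; exact Icc_subset_Icc le_rfl hlx1
  have hsub3 : uIcc (l * x) x ⊆ Icc (0:ℝ) 1 := by
    rw [uIcc_of_le hlxx]; exact Icc_subset_Icc hlx0 hx1
  have hint1 : IntervalIntegrable c volume 0 x :=
    (hc.mono hsub1).intervalIntegrable
  have hint2 : IntervalIntegrable c volume 0 (l * x) :=
    (hc.mono hsub2).intervalIntegrable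
  have hint3 : IntervalIntegrable c volume (l * x) x :=
    (hc.mono hsub3).intervalIntegrable
  have hintc : IntervalIntegrable (fun q => c (q / l)) volume 0 (l * x) := by
    apply MonotoneOn.intervalIntegrable
    intro r hr s hs hrs
    rw [uIcc_of_le hlx0] at hr hs
    have hr' : r / l ∈ Icc (0:ℝ) 1 :=
      ⟨div_nonneg hr.1 hl0.le, by rw [div_le_one hl0]; nlinarith [hr.2]⟩
    have hs' : s / l ∈ Icc (0:ℝ) 1 :=
      ⟨div_nonneg hs.1 hl0.le, by rw [div_le_one hl0]; nlinarith [hs.2]⟩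
    exact hc hr' hs' (by gcongr)
  -- substitution: ∫₀^{lx} c(q/l) = l * ∫₀^x c
  have E2 : (∫ q in (0:ℝ)..(l * x), c (q / l)) = l * ∫ q in (0:ℝ)..x, c q := by
    rw [intervalIntegral.integral_comp_div c (ne_of_gt hl0)]
    rw [zero_div, mul_div_cancel_left₀ _ (ne_of_gt hl0), smul_eq_mul]
  have E1 : (∫ q in (0:ℝ)..(l * x), (c (q / l) - c q))
      = l * (∫ q in (0:ℝ)..x, c q) - ∫ q in (0:ℝ)..(l * x), c q := by
    rw [intervalIntegral.integral_sub hintc hint2, E2]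
  have E3 : (∫ q in (0:ℝ)..x, (v - c q)) = v * x - ∫ q in (0:ℝ)..x, c q := by
    rw [intervalIntegral.integral_sub intervalIntegrable_const hint1]
    simp [mul_comm]
  have E4 : (∫ q in (0:ℝ)..x, c q)
      = (∫ q in (0:ℝ)..(l * x), c q) + ∫ q in (l * x)..x, c q :=
    (intervalIntegral.integral_add_adjacent_intervals hint2 hint3).symm
  have E5 : (∫ q in (l * x)..x, (v - c q))
      = v * (x - l * x) - ∫ q in (l * x)..x, c q := by
    rw [intervalIntegral.integral_sub intervalIntegrable_const hint3]
    simp [mul_comm]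
  -- key inequality
  have key : (∫ q in (l * x)..x, (v - c q)) ≤ U * Real.log (1 / l) := by
    rcases eq_or_lt_of_le hx0 with hxe | hxp
    · rw [← hxe, mul_zero, intervalIntegral.integral_same]
      exact mul_nonneg hU0 hlog0
    · have hlxpos : 0 < l * x := mul_pos hl0 hxp
      have hintd : IntervalIntegrable (fun q => U / q) volume (l * x) x := by
        apply ContinuousOn.intervalIntegrable
        apply continuousOn_const.div continuousOn_id
        intro q hq
        rw [uIcc_of_le hlxx] at hq
        exact ne_of_gt (lt_of_lt_of_le hlxpos hq.1)
      have hle : ∀ q ∈ Icc (l * x) x, v - c q ≤ U / q := by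
        intro q hq
        have hq0 : 0 < q := lt_of_lt_of_le hlxpos hq.1
        rw [le_div_iff₀ hq0]
        by_cases hvc : v - c q ≤ 0
        · exact le_trans (mul_nonpos_of_nonpos_of_nonneg hvc hq0.le) hU0
        · push_neg at hvc
          have h1 : q ≤ accProb c (c q) :=
            le_accProb c hc hq0.le (hq.2.trans hx1)
          calc (v - c q) * q ≤ (v - c q) * accProb c (c q) :=
                mul_le_mul_of_nonneg_left h1 (by linarith)
            _ ≤ U := le_ciSup hbdd (c q)
      calc (∫ q in (l * x)..x, (v - c q)) ≤ ∫ q in (l * x)..x, U / q :=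
            intervalIntegral.integral_mono_on hlxx
              (intervalIntegrable_const.sub hint3) hintd hle
        _ = U * Real.log (1 / l) := by
            simp_rw [div_eq_mul_one_div U]
            rw [intervalIntegral.integral_const_mul,
              integral_one_div (by
                rw [uIcc_of_le hlxx]
                intro h0
                exact absurd h0.1 (not_le.mpr hlxpos))]
            congr 1
            rw [mul_comm l x, div_mul_eq_div_div, div_self (ne_of_gt hxp)]
  rw [E1, E3]
  nlinarith [key, E4, E5]
end

section
/- Buyer rectangle bound (fixed value, λ = 1/2): for every nondecreasing c : [0,1] → ℝ and every v ∈ ℝ, one has sup_{p ∈ ℝ} (v − p)·x(p) ≥ ∫_{x(v)/2}^{x(v)} (v − c(q)) dq. -/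
open MeasureTheory Set

lemma accSet_lt_top (c : ℝ → ℝ) (p : ℝ) :
    volume {q : ℝ | q ∈ Icc (0:ℝ) 1 ∧ c q ≤ p} < ⊤ := by
  apply lt_of_le_of_lt (measure_mono (fun q hq => hq.1))
  simp [Real.volume_Icc]

theorem stmt11 (c : ℝ → ℝ) (hc : MonotoneOn c (Icc (0:ℝ) 1)) (v : ℝ) :
    (⨆ p : ℝ, (v - p) * accProb c p) ≥
      ∫ q in (accProb c v / 2)..(accProb c v), (v - c q) := by
  set x := accProb c v with hx
  have hx0 : 0 ≤ x := accProb_nonneg c v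
  have hx1 : x ≤ 1 := accProb_le_one c v
  -- boundedness of the sup
  have hbdd : BddAbove (Set.range fun p : ℝ => (v - p) * accProb c p) := by
    refine ⟨max 0 (v - c 0), ?_⟩
    rintro _ ⟨p, rfl⟩
    show (v - p) * accProb c p ≤ max 0 (v - c 0)
    by_cases hp : p < c 0
    · have hempty : {q : ℝ | q ∈ Icc (0:ℝ) 1 ∧ c q ≤ p} = ∅ := by
        ext q
        simp only [mem_setOf_eq, mem_empty_iff_false, iff_false, not_and]
        intro hq hcq
        have : c 0 ≤ c q := hc (by simp) hq hq.1
        linarith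
      have hz : accProb c p = 0 := by unfold accProb; rw [hempty]; simp
      rw [hz, mul_zero]
      exact le_max_left _ _
    · push_neg at hp
      by_cases hpv : p ≤ v
      · have h1 : (v - p) * accProb c p ≤ (v - p) * 1 :=
          mul_le_mul_of_nonneg_left (accProb_le_one c p) (by linarith)
        have : v - p ≤ v - c 0 := by linarith
        calc (v - p) * accProb c p ≤ v - p := by linarith
          _ ≤ max 0 (v - c 0) := le_trans this (le_max_right _ _)
      · push_neg at hpv
        have : (v - p) * accProb c p ≤ 0 :=
          mul_nonpos_of_nonpos_of_nonneg (by linarith) (accProb_nonneg c p)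
        exact le_trans this (le_max_left _ _)
  rcases eq_or_lt_of_le hx0 with h0 | hxpos
  · -- x = 0 : integral is zero
    rw [← h0]
    norm_num
    calc (0:ℝ) = (v - v) * accProb c v := by ring
      _ ≤ ⨆ p : ℝ, (v - p) * accProb c p := le_ciSup hbdd v
  · -- x > 0
    set b := c (x / 2) with hb
    have hhalf : x / 2 ∈ Icc (0:ℝ) 1 := ⟨by linarith, by linarith⟩
    -- every t in [0,1] with t < x satisfies c t ≤ v
    have hkey : ∀ t ∈ Icc (0:ℝ) 1, t < x → c t ≤ v := by
      intro t ht htx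
      by_contra hcv
      push_neg at hcv
      have hsub : {q : ℝ | q ∈ Icc (0:ℝ) 1 ∧ c q ≤ v} ⊆ Ico 0 t := by
        intro q hq
        refine ⟨hq.1.1, ?_⟩
        by_contra hqt
        push_neg at hqt
        have : c t ≤ c q := hc ht hq.1 hqt
        linarith [hq.2]
      have hm : volume {q : ℝ | q ∈ Icc (0:ℝ) 1 ∧ c q ≤ v} ≤ ENNReal.ofReal t := by
        calc volume {q : ℝ | q ∈ Icc (0:ℝ) 1 ∧ c q ≤ v} ≤ volume (Ico 0 t) :=
              measure_mono hsub
          _ = ENNReal.ofReal t := by simp [Real.volume_Ico]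
      have : x ≤ t := by
        have := ENNReal.toReal_mono (by simp) hm
        simpa [hx, accProb, ENNReal.toReal_ofReal ht.1] using this
      linarith
    have hbv : b ≤ v := hkey _ hhalf (by linarith)
    -- accProb c b ≥ x / 2
    have hacc : x / 2 ≤ accProb c b := by
      have hsub : Icc (0:ℝ) (x/2) ⊆ {q : ℝ | q ∈ Icc (0:ℝ) 1 ∧ c q ≤ b} := by
        intro q hq
        have hq1 : q ∈ Icc (0:ℝ) 1 := ⟨hq.1, le_trans hq.2 hhalf.2⟩
        exact ⟨hq1, hc hq1 hhalf hq.2⟩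
      have hm : ENNReal.ofReal (x/2) ≤ volume {q : ℝ | q ∈ Icc (0:ℝ) 1 ∧ c q ≤ b} := by
        calc ENNReal.ofReal (x/2) = volume (Icc (0:ℝ) (x/2)) := by simp [Real.volume_Icc]
          _ ≤ _ := measure_mono hsub
      have := ENNReal.toReal_mono (accSet_lt_top c b).ne hm
      simpa [accProb, ENNReal.toReal_ofReal (by linarith : (0:ℝ) ≤ x/2)] using this
    -- integrability
    have hci : IntervalIntegrable c volume (x/2) x := by
      apply MonotoneOn.intervalIntegrable
      apply hc.mono
      rw [uIcc_of_le (by linarith)]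
      exact Icc_subset_Icc (by linarith) hx1
    have hfi : IntervalIntegrable (fun q => v - c q) volume (x/2) x :=
      (intervalIntegrable_const).sub hci
    -- bound the integral
    have hint : (∫ q in (x/2)..x, (v - c q)) ≤ (v - b) * (x/2) := by
      have h1 : (∫ q in (x/2)..x, (v - c q)) ≤ ∫ _ in (x/2)..x, (v - b) := by
        apply intervalIntegral.integral_mono_on (by linarith) hfi intervalIntegrable_const
        intro q hq
        have hq1 : q ∈ Icc (0:ℝ) 1 := ⟨le_trans hhalf.1 hq.1, le_trans hq.2 hx1⟩
        have : b ≤ c q := hc hhalf hq1 hq.1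
        linarith
      have h2 : (∫ _ in (x/2)..x, (v - b)) = (v - b) * (x/2) := by
        rw [intervalIntegral.integral_const]
        simp only [smul_eq_mul]
        ring
      linarith
    have hfb : (v - b) * (x/2) ≤ (v - b) * accProb c b :=
      mul_le_mul_of_nonneg_left hacc (by linarith)
    calc (∫ q in (x/2)..x, (v - c q)) ≤ (v - b) * accProb c b := by linarith
      _ ≤ ⨆ p : ℝ, (v - p) * accProb c p := le_ciSup hbdd b
end

section
/- Seller quantile-doubling bound ('half of S'): for every nondecreasing c : [0,1] → ℝ and every X ∈ [0,1], one has ∫₀^{X/2} (c(2q) − c(q)) dq ≥ (1/2) · ∫₀^{X/2} (c(X/2) − c(q)) dq. -/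
open MeasureTheory Set

theorem stmt12 (c : ℝ → ℝ) (hc : MonotoneOn c (Icc (0:ℝ) 1))
    (X : ℝ) (hX : X ∈ Icc (0:ℝ) 1) :
    (∫ q in (0:ℝ)..(X / 2), (c (2 * q) - c q)) ≥
      (1 / 2) * ∫ q in (0:ℝ)..(X / 2), (c (X / 2) - c q) := by
  obtain ⟨hX0, hX1⟩ := hX
  have hhalf : (0:ℝ) ≤ X / 2 := by linarith
  have hhX : X / 2 ≤ X := by linarith
  -- integrability of c on subintervals
  have hint : ∀ a b : ℝ, 0 ≤ a → a ≤ b → b ≤ 1 → IntervalIntegrable c volume a b := by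
    intro a b ha hab hb1
    exact ((hc.mono (by rw [uIcc_of_le hab]; exact Icc_subset_Icc ha hb1)).intervalIntegrable)
  have h1 : IntervalIntegrable c volume 0 (X / 2) := hint 0 (X/2) le_rfl hhalf (by linarith)
  have h2 : IntervalIntegrable c volume (X/2) X := hint (X/2) X hhalf hhX hX1
  have h3 : IntervalIntegrable c volume 0 X := hint 0 X le_rfl hX0 hX1
  -- integrability of q ↦ c (2 q) on [0, X/2]
  have h4 : IntervalIntegrable (fun q => c (2 * q)) volume 0 (X / 2) := by
    apply MonotoneOn.intervalIntegrable
    intro x hx y hy hxy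
    rw [uIcc_of_le hhalf] at hx hy
    exact hc ⟨by linarith [hx.1], by linarith [hx.2]⟩ ⟨by linarith [hy.1], by linarith [hy.2]⟩
      (by linarith)
  -- substitution: ∫₀^{X/2} c(2q) = (1/2) ∫₀^X c
  have hsub : (∫ q in (0:ℝ)..(X/2), c (2 * q)) = (2:ℝ)⁻¹ • ∫ q in (0:ℝ)..X, c q := by
    have := intervalIntegral.integral_comp_mul_left (a := (0:ℝ)) (b := X/2) c
      (c := (2:ℝ)) (by norm_num)
    rw [show (2:ℝ) * (X/2) = X by ring, mul_zero] at this
    exact this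
  -- ∫_{X/2}^X c ≥ (X/2) * c(X/2)
  have hmono : (X - X/2) * c (X/2) ≤ ∫ q in (X/2)..X, c q := by
    have : (∫ q in (X/2)..X, c (X/2)) ≤ ∫ q in (X/2)..X, c q := by
      apply intervalIntegral.integral_mono_on hhX (by simp) h2
      intro x hx
      exact hc ⟨hhalf, by linarith⟩ ⟨by linarith [hx.1], le_trans hx.2 hX1⟩ hx.1
    simpa [mul_comm] using this
  have hsplit : (∫ q in (0:ℝ)..(X/2), c q) + (∫ q in (X/2)..X, c q)
      = ∫ q in (0:ℝ)..X, c q :=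
    intervalIntegral.integral_add_adjacent_intervals h1 h2
  rw [intervalIntegral.integral_sub h4 h1, intervalIntegral.integral_sub
    (intervalIntegrable_const) h1, hsub, intervalIntegral.integral_const]
  rw [← hsplit] at *
  simp only [smul_eq_mul] at *
  nlinarith [hmono]
end

section
/- Fixed-value 4-approximation: for every nondecreasing c : [0,1] → ℝ and every v ∈ ℝ, one has sup_{p ∈ ℝ} (v − p)·x(p) + ∫₀^{x(v)/2} (c(2q) − c(q)) dq ≥ (1/2) · ∫₀^{x(v)} (v − c(q)) dq. -/
open MeasureTheory Set

/-! With `x = x(v)` and `m = x / 2`: the price `c m` is accepted with probability at least `m`,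
and `c m ≤ v` because the seller accepts `v` with probability `x > m`; so the buyer's optimal
utility is at least `m (v - c m)`. The substitution `q ↦ 2q` turns `∫₀^m c(2q)` into `½ ∫₀^x c`,
after which the claim reduces to `m c(m) ≤ ∫ₘ^x c`, which holds because `c` is nondecreasing. -/

lemma mul_le_integral_of_monotoneOn {c : ℝ → ℝ} {a b : ℝ} (hab : a ≤ b)
    (hc : MonotoneOn c (Icc a b)) : (b - a) * c a ≤ ∫ q in a..b, c q := by
  have hint : IntervalIntegrable c volume a b := by
    rw [← uIcc_of_le hab] at hc
    exact hc.intervalIntegrable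
  simpa using intervalIntegral.integral_mono_on hab intervalIntegrable_const hint
    (fun q hq => hc (left_mem_Icc.2 hab) hq hq.1)

lemma integral_comp_two_mul_half (c : ℝ → ℝ) (x : ℝ) :
    ∫ q in (0:ℝ)..x / 2, c (2 * q) = (1 / 2) * ∫ q in (0:ℝ)..x, c q := by
  rw [intervalIntegral.integral_comp_mul_left c two_ne_zero]
  norm_num [mul_div_cancel₀]

lemma half_integral_sub_sub_integral_doubling_le {c : ℝ → ℝ} {x : ℝ} (hx : 0 ≤ x)
    (hc : MonotoneOn c (Icc 0 x)) (v : ℝ) :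
    (1 / 2) * (∫ q in (0:ℝ)..x, (v - c q)) - ∫ q in (0:ℝ)..x / 2, (c (2 * q) - c q)
      ≤ x / 2 * (v - c (x / 2)) := by
  have hint : ∀ a b, 0 ≤ a → a ≤ b → b ≤ x → IntervalIntegrable c volume a b :=
    fun a b ha hab hb =>
      (hc.mono (by rw [uIcc_of_le hab]; exact Icc_subset_Icc ha hb)).intervalIntegrable
  have hc2 : IntervalIntegrable (fun q => c (2 * q)) volume 0 (x / 2) := by
    refine MonotoneOn.intervalIntegrable ?_
    rw [uIcc_of_le (by linarith)]
    intro a ha b hb hab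
    exact hc ⟨by linarith [ha.1], by linarith [ha.2]⟩ ⟨by linarith [hb.1], by linarith [hb.2]⟩
      (by linarith)
  have hupper := mul_le_integral_of_monotoneOn (by linarith : x / 2 ≤ x)
    (hc.mono (Icc_subset_Icc (by linarith) le_rfl))
  have hlower := hint 0 (x / 2) le_rfl (by linarith) (by linarith)
  rw [intervalIntegral.integral_sub intervalIntegrable_const (hint 0 x le_rfl hx le_rfl),
    intervalIntegral.integral_sub hc2 hlower, integral_comp_two_mul_half,
    ← intervalIntegral.integral_add_adjacent_intervals hlower
      (hint (x / 2) x (by linarith) (by linarith) le_rfl)]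
  simp only [intervalIntegral.integral_const, smul_eq_mul]
  linarith

section accProb

variable {c : ℝ → ℝ}

lemma le_accProb_apply (hc : MonotoneOn c (Icc 0 1)) {q : ℝ} (hq : q ∈ Icc 0 1) :
    q ≤ accProb c (c q) := by
  have hsub : Icc 0 q ⊆ {q' : ℝ | q' ∈ Icc (0:ℝ) 1 ∧ c q' ≤ c q} := fun q' hq' =>
    have hq'1 : q' ∈ Icc (0:ℝ) 1 := ⟨hq'.1, hq'.2.trans hq.2⟩
    ⟨hq'1, hc hq'1 hq hq'.2⟩
  have := measure_mono (μ := volume) hsub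
  have hfin : volume {q' : ℝ | q' ∈ Icc (0:ℝ) 1 ∧ c q' ≤ c q} ≠ ⊤ :=
    ne_top_of_le_ne_top measure_Icc_lt_top.ne (measure_mono fun _ hq' => hq'.1)
  rwa [Real.volume_Icc, sub_zero, ENNReal.ofReal_le_iff_le_toReal hfin] at this

lemma accProb_le_of_lt_apply (hc : MonotoneOn c (Icc 0 1)) {q p : ℝ} (hq : q ∈ Icc 0 1)
    (hp : p < c q) : accProb c p ≤ q := by
  have hsub : {q' : ℝ | q' ∈ Icc (0:ℝ) 1 ∧ c q' ≤ p} ⊆ Ico 0 q := fun q' hq' =>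
    ⟨hq'.1.1, lt_of_not_ge fun hqq' => (hp.trans_le (hc hq hq'.1 hqq')).not_ge hq'.2⟩
  have := measure_mono (μ := volume) hsub
  rw [Real.volume_Ico, sub_zero] at this
  exact ENNReal.toReal_le_of_le_ofReal hq.1 this

lemma bddAbove_range_mul_accProb (hc : MonotoneOn c (Icc 0 1)) (v : ℝ) :
    BddAbove (range fun p => (v - p) * accProb c p) := by
  refine ⟨max 0 (v - c 0), ?_⟩
  rintro _ ⟨p, rfl⟩
  rcases lt_or_ge p (c 0) with hp | hp
  · have := accProb_le_of_lt_apply hc (left_mem_Icc.2 zero_le_one) hp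
    simp [le_antisymm this (accProb_nonneg c p)]
  rcases le_or_gt v p with hvp | hvp
  · exact (mul_nonpos_of_nonpos_of_nonneg (by linarith) (accProb_nonneg c p)).trans
      (le_max_left _ _)
  · calc (v - p) * accProb c p ≤ v - p :=
          mul_le_of_le_one_right (by linarith) (accProb_le_one c p)
      _ ≤ max 0 (v - c 0) := le_max_of_le_right (by linarith)

lemma mul_sub_le_iSup_mul_accProb (hc : MonotoneOn c (Icc 0 1)) {q v : ℝ} (hq : q ∈ Icc 0 1)
    (hqv : c q ≤ v) : q * (v - c q) ≤ ⨆ p, (v - p) * accProb c p :=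
  calc q * (v - c q) ≤ (v - c q) * accProb c (c q) := by
        rw [mul_comm]; exact mul_le_mul_of_nonneg_left (le_accProb_apply hc hq) (by linarith)
    _ ≤ ⨆ p, (v - p) * accProb c p := le_ciSup (bddAbove_range_mul_accProb hc v) (c q)

lemma half_accProb_mul_le_iSup (hc : MonotoneOn c (Icc 0 1)) (v : ℝ) :
    accProb c v / 2 * (v - c (accProb c v / 2)) ≤ ⨆ p, (v - p) * accProb c p := by
  set x := accProb c v
  rcases (show 0 ≤ x from accProb_nonneg c v).eq_or_lt with hx | hx
  · rw [← hx]
    simpa using le_ciSup (bddAbove_range_mul_accProb hc v) v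
  have hm : x / 2 ∈ Icc (0:ℝ) 1 := ⟨by linarith, by linarith [accProb_le_one c v]⟩
  refine mul_sub_le_iSup_mul_accProb hc hm (le_of_not_gt fun hlt => ?_)
  linarith [accProb_le_of_lt_apply hc hm hlt]

end accProb

theorem stmt13 (c : ℝ → ℝ) (hc : MonotoneOn c (Icc (0:ℝ) 1)) (v : ℝ) :
    (⨆ p : ℝ, (v - p) * accProb c p) +
        (∫ q in (0:ℝ)..(accProb c v / 2), (c (2 * q) - c q)) ≥
      (1 / 2) * ∫ q in (0:ℝ)..(accProb c v), (v - c q) := by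
  have hx := accProb_le_one c v
  linarith [half_accProb_mul_le_iSup hc v, half_integral_sub_sub_integral_doubling_le
    (accProb_nonneg c v) (hc.mono (Icc_subset_Icc le_rfl hx)) v]
end

section
/- Existence and uniqueness of the optimal parameter: there exists a unique λ* ∈ (0,1) satisfying ln(1/λ*) = 1/λ* − 2, and for this λ* one has (1 + ln(1/λ*))/(1 − λ*) = 1/λ*. -/
open Set Real

/-! Substituting `t = 1/λ`, the equation reads `t - log t = 2` with `t > 1`. The map `t ↦ t - log t`
is strictly increasing on `[1, ∞)` (as `log (t/s) < t/s - 1 ≤ t - s`), takes the value `1` at `t = 1`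
and is at least `c > 0` at `t = 2c` (as `log 2 < 1`), so the intermediate value theorem gives exactly one root.
At the root, `1 + log (1/λ) = 1/λ - 1 = (1 - λ)/λ`. -/

lemma strictMonoOn_sub_log : StrictMonoOn (fun t : ℝ => t - log t) (Ici 1) := by
  intro s (hs : 1 ≤ s) t _ hst
  have hs0 : 0 < s := by linarith
  have ht0 : 0 < t := by linarith
  have hlog : log (t / s) < t / s - 1 :=
    log_lt_sub_one_of_pos (div_pos ht0 hs0) ((one_lt_div hs0).2 hst).ne'
  have hquot : t / s - 1 ≤ t - s := by
    rw [div_sub_one hs0.ne']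
    exact div_le_self (by linarith) hs
  rw [log_div ht0.ne' hs0.ne'] at hlog
  show s - log s < t - log t
  linarith

lemma le_two_mul_sub_log_two_mul {c : ℝ} (hc : 0 < c) : c ≤ 2 * c - log (2 * c) := by
  have h2 := log_two_lt_d9
  have hlog := log_le_sub_one_of_pos hc
  rw [log_mul two_ne_zero hc.ne']
  norm_num at h2
  linarith

lemma existsUnique_sub_log_eq {c : ℝ} (hc : 1 < c) : ∃! t : ℝ, 1 < t ∧ t - log t = c := by
  have hcont : ContinuousOn (fun t : ℝ => t - log t) (Icc 1 (2 * c)) :=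
    continuousOn_id.sub <| continuousOn_log.mono fun t ht => by
      have : (1 : ℝ) ≤ t := ht.1
      simp only [mem_compl_iff, mem_singleton_iff]; linarith
  have hc_mem : c ∈ Icc (1 - log 1) (2 * c - log (2 * c)) :=
    ⟨by rw [log_one]; linarith, le_two_mul_sub_log_two_mul (by linarith)⟩
  obtain ⟨t, ht, htc⟩ := intermediate_value_Icc (by linarith) hcont hc_mem
  have ht1 : 1 < t := by
    refine lt_of_le_of_ne ht.1 fun h => ?_
    simp only [← h, log_one] at htc
    linarith
  refine ⟨t, ⟨ht1, htc⟩, fun s ⟨hs1, hsc⟩ => ?_⟩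
  exact strictMonoOn_sub_log.injOn (mem_Ici.2 hs1.le) (mem_Ici.2 ht1.le) (hsc.trans htc.symm)

theorem stmt15 :
    (∃! l : ℝ, l ∈ Ioo (0:ℝ) 1 ∧ Real.log (1 / l) = 1 / l - 2) ∧
      ∀ l : ℝ, l ∈ Ioo (0:ℝ) 1 → Real.log (1 / l) = 1 / l - 2 →
        (1 + Real.log (1 / l)) / (1 - l) = 1 / l := by
  constructor
  · obtain ⟨t, ⟨ht1, htc⟩, huniq⟩ := existsUnique_sub_log_eq one_lt_two
    have ht0 : 0 < t := by linarith
    refine ⟨1 / t, ⟨⟨by positivity, (div_lt_one ht0).2 ht1⟩, ?_⟩, ?_⟩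
    · rw [one_div_one_div]; linarith
    · rintro l ⟨hl, hleq⟩
      have hlt : 1 / l = t := huniq _ ⟨one_lt_one_div hl.1 hl.2, by linarith⟩
      rw [← hlt, one_div_one_div]
  · intro l hl heq
    have hl0 : l ≠ 0 := hl.1.ne'
    have hl1 : 1 - l ≠ 0 := by linarith [hl.2]
    rw [heq]
    field_simp
    ring
end

section
/- Optimality of λ*: if λ* ∈ (0,1) satisfies ln(1/λ*) = 1/λ* − 2, then for every λ ∈ (0,1) one has (1 + ln(1/λ))/(1 − λ) ≥ 1/λ*; that is, the function λ ↦ (1 + ln(1/λ))/(1 − λ) attains its minimum over (0,1) at λ*, with minimum value 1/λ*. -/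
open Set

theorem stmt16 (lstar : ℝ) (hmem : lstar ∈ Ioo (0:ℝ) 1)
    (hfoc : Real.log (1 / lstar) = 1 / lstar - 2) :
    (∀ l ∈ Ioo (0:ℝ) 1, (1 + Real.log (1 / l)) / (1 - l) ≥ 1 / lstar) ∧
      (1 + Real.log (1 / lstar)) / (1 - lstar) = 1 / lstar := by
  obtain ⟨hs0, hs1⟩ := hmem
  have hsne : lstar ≠ 0 := ne_of_gt hs0
  have hlogstar : Real.log lstar = 2 - 1 / lstar := by
    have := hfoc
    rw [Real.log_div one_ne_zero hsne, Real.log_one] at this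
    linarith
  constructor
  · intro l hl
    obtain ⟨hl0, hl1⟩ := hl
    have hlne : l ≠ 0 := ne_of_gt hl0
    have hkey : Real.log (l / lstar) ≤ l / lstar - 1 :=
      Real.log_le_sub_one_of_pos (by positivity)
    rw [Real.log_div hlne hsne] at hkey
    have hnum : 1 + Real.log (1 / l) ≥ (1 - l) / lstar := by
      rw [Real.log_div one_ne_zero hlne, Real.log_one, hlogstar] at *
      have : (1 - l) / lstar = 1 / lstar - l / lstar := by ring
      linarith
    rw [ge_iff_le, div_le_div_iff₀ hs0 (by linarith)]
    calc 1 * (1 - l) = (1 - l) / lstar * lstar := by field_simp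
    _ ≤ (1 + Real.log (1 / l)) * lstar := by
        apply mul_le_mul_of_nonneg_right hnum (le_of_lt hs0)
  · have h1 : (1:ℝ) - lstar ≠ 0 := by linarith
    rw [hfoc]
    field_simp
    ring
end
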